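/- arXiv:2211.04396 — 3 statements merged into one kernel-verified Lean document; each statement's English description precedes it below -/
import Mathlib

section
/- Let g(x,y,z) = a₁x² + a₂y² + a₃z² + a₂₃yz + a₁₃xz + a₁₂xy be a positive definite integral ternary quadratic form which is primitive (gcd(a₁,a₂,a₃,a₂₃,a₁₃,a₁₂) = 1) and has at least one odd cross coefficient among a₁₂, a₁₃, a₂₃ (equivalently, 2g is improperly primitive). Let A = A(g) be the coefficient matrix of g and let c be the content of the adjoint form adj(g), i.e., c = gcd of the three diagonal entries adj(A)_{ii} and the three doubled off-diagonal entries 2·adj(A)_{ij} (i < j) of the adjugate matrix adj(A). Then c is odd and c² divides disc(g) = −det(A)/2. (These are the assertions that I₁(g) = −c is odd and that 16 divides I₂(g) = 16·disc(g)/I₁(g)².) -/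
/-- The integral ternary quadratic form with coefficients `a i j` (for `i ≤ j`). -/
def ternaryForm (a : Fin 3 → Fin 3 → ℤ) (x : Fin 3 → ℤ) : ℤ :=
  ∑ i : Fin 3, ∑ j : Fin 3, if i ≤ j then a i j * x i * x j else 0

/-- The coefficient matrix `A(g)`: diagonal entries `2 * a i i`, off-diagonal `a i j`. -/
def coeffMatrix (a : Fin 3 → Fin 3 → ℤ) : Matrix (Fin 3) (Fin 3) ℤ :=
  Matrix.of fun i j => if i = j then 2 * a i i else if i < j then a i j else a j i

lemma odd_dvd_of_dvd_two_mul {k m : ℤ} (hk : Odd k) (h : k ∣ 2 * m) : k ∣ m := by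
  obtain ⟨t, ht⟩ := h
  have h2 : (2 : ℤ) ∣ t := by
    have hkt : (2 : ℤ) ∣ k * t := ⟨m, by linarith⟩
    rcases (Int.prime_two.dvd_mul).mp hkt with h | h
    · exfalso; obtain ⟨n, hn⟩ := hk; obtain ⟨s, hs⟩ := h; omega
    · exact h
  obtain ⟨s, hs⟩ := h2
  refine ⟨s, ?_⟩
  have : 2 * m = 2 * (k * s) := by rw [ht, hs]; ring
  linarith

lemma even_of_dvd_sub' {x y : ℤ} (h : (2 : ℤ) ∣ x - y * y) (hx : Even x) : Even y := by
  have he : Even (x - y * y) := (even_iff_two_dvd).mpr h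
  have : Even (y * y) := (Int.even_sub.mp he).mp hx
  rcases Int.even_mul.mp this with h | h <;> exact h

lemma dvd_mul_gcd' {c d x y : ℤ} (hx : c ∣ d * x) (hy : c ∣ d * y) :
    c ∣ d * gcd x y := by
  have h := dvd_gcd hx hy
  rw [gcd_mul_left] at h
  exact h.trans (Associated.mul_right (normalize_associated d) (gcd x y)).dvd

/-- For a positive definite primitive integral ternary form `g` with an odd cross
coefficient (so `2g` is improperly primitive), the content `c` of the adjoint form
(gcd of the diagonal entries and doubled off-diagonal entries of `adj(A(g))`) is odd,
and `c²` divides `disc(g) = -det(A(g))/2`. -/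
theorem adjoint_content_odd_and_sq_dvd_disc
    (a : Fin 3 → Fin 3 → ℤ)
    (hpos : ∀ x : Fin 3 → ℤ, x ≠ 0 → 0 < ternaryForm a x)
    (hprim : Finset.gcd (Finset.univ.filter fun ij : Fin 3 × Fin 3 => ij.1 ≤ ij.2)
        (fun ij => a ij.1 ij.2) = 1)
    (hodd : ∃ i j : Fin 3, i < j ∧ Odd (a i j))
    (A : Matrix (Fin 3) (Fin 3) ℤ) (hA : A = coeffMatrix a)
    (c : ℤ)
    (hc : c = Finset.gcd (Finset.univ.filter fun ij : Fin 3 × Fin 3 => ij.1 ≤ ij.2)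
        (fun ij => if ij.1 = ij.2 then A.adjugate ij.1 ij.2 else 2 * A.adjugate ij.1 ij.2)) :
    Odd c ∧ c ^ 2 ∣ (-A.det / 2) := by
  subst hA
  have hAe : coeffMatrix a = !![2*a 0 0, a 0 1, a 0 2; a 0 1, 2*a 1 1, a 1 2;
      a 0 2, a 1 2, 2*a 2 2] := by
    ext i j; fin_cases i <;> fin_cases j <;> simp [coeffMatrix]
  have hadj : (coeffMatrix a).adjugate =
      !![4*a 1 1*a 2 2 - a 1 2*a 1 2, a 0 2*a 1 2 - 2*a 2 2*a 0 1, a 0 1*a 1 2 - 2*a 1 1*a 0 2;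
         a 0 2*a 1 2 - 2*a 2 2*a 0 1, 4*a 0 0*a 2 2 - a 0 2*a 0 2, a 0 1*a 0 2 - 2*a 0 0*a 1 2;
         a 0 1*a 1 2 - 2*a 1 1*a 0 2, a 0 1*a 0 2 - 2*a 0 0*a 1 2, 4*a 0 0*a 1 1 - a 0 1*a 0 1] := by
    rw [hAe, Matrix.adjugate_fin_three_of]
    ext i j; fin_cases i <;> fin_cases j <;> simp <;> ring
  have hdet : (coeffMatrix a).det =
      2 * (4*a 0 0*a 1 1*a 2 2 + a 0 1*a 0 2*a 1 2 - a 0 0*(a 1 2*a 1 2)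
        - a 1 1*(a 0 2*a 0 2) - a 2 2*(a 0 1*a 0 1)) := by
    rw [hAe]; simp [Matrix.det_fin_three]; ring
  have hd : ∀ ij : Fin 3 × Fin 3, ij.1 ≤ ij.2 →
      c ∣ (if ij.1 = ij.2 then (coeffMatrix a).adjugate ij.1 ij.2
        else 2 * (coeffMatrix a).adjugate ij.1 ij.2) := by
    intro ij h
    rw [hc]
    exact Finset.gcd_dvd (Finset.mem_filter.mpr ⟨Finset.mem_univ _, h⟩)
  have hc1 : c ∣ 4*a 1 1*a 2 2 - a 1 2*a 1 2 := by
    have := hd (0, 0) (by decide); simpa [hadj] using this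
  have hc2 : c ∣ 4*a 0 0*a 2 2 - a 0 2*a 0 2 := by
    have := hd (1, 1) (by decide); simpa [hadj] using this
  have hc3 : c ∣ 4*a 0 0*a 1 1 - a 0 1*a 0 1 := by
    have := hd (2, 2) (by decide); simpa [hadj] using this
  have hc12 : c ∣ 2 * (a 0 2*a 1 2 - 2*a 2 2*a 0 1) := by
    have := hd (0, 1) (by decide); simpa [hadj] using this
  have hc13 : c ∣ 2 * (a 0 1*a 1 2 - 2*a 1 1*a 0 2) := by
    have := hd (0, 2) (by decide); simpa [hadj] using this
  have hc23 : c ∣ 2 * (a 0 1*a 0 2 - 2*a 0 0*a 1 2) := by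
    have := hd (1, 2) (by decide); simpa [hadj] using this
  have hpqr : Odd (a 0 1) ∨ Odd (a 0 2) ∨ Odd (a 1 2) := by
    obtain ⟨i, j, hij, h⟩ := hodd
    fin_cases i <;> fin_cases j <;>
      first
        | exact absurd hij (by decide)
        | (exact Or.inl h)
        | (exact Or.inr (Or.inl h))
        | (exact Or.inr (Or.inr h))
  have hoddc : Odd c := by
    rw [← Int.not_even_iff_odd]
    intro he
    have h2 : (2 : ℤ) ∣ c := even_iff_two_dvd.mp he
    have hp : Even (a 0 1) := even_of_dvd_sub' (h2.trans hc3) ⟨2*a 0 0*a 1 1, by ring⟩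
    have hq : Even (a 0 2) := even_of_dvd_sub' (h2.trans hc2) ⟨2*a 0 0*a 2 2, by ring⟩
    have hr : Even (a 1 2) := even_of_dvd_sub' (h2.trans hc1) ⟨2*a 1 1*a 2 2, by ring⟩
    rcases hpqr with h | h | h <;> exact (Int.not_odd_iff_even.mpr (by assumption)) h
  have he12 : c ∣ a 0 2*a 1 2 - 2*a 2 2*a 0 1 := odd_dvd_of_dvd_two_mul hoddc hc12
  have he13 : c ∣ a 0 1*a 1 2 - 2*a 1 1*a 0 2 := odd_dvd_of_dvd_two_mul hoddc hc13
  have he23 : c ∣ a 0 1*a 0 2 - 2*a 0 0*a 1 2 := odd_dvd_of_dvd_two_mul hoddc hc23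
  -- c^2 divides det * t for the six coefficients t
  have sqdvd : ∀ u v x y : ℤ, c ∣ u → c ∣ v → c ∣ x → c ∣ y → c ^ 2 ∣ u * v - x * y := by
    intro u v x y h1 h2 h3 h4
    exact dvd_sub (by rw [sq]; exact mul_dvd_mul h1 h2) (by rw [sq]; exact mul_dvd_mul h3 h4)
  have k1 : c ^ 2 ∣ (coeffMatrix a).det * (2 * a 0 0) := by
    have h : (coeffMatrix a).det * (2 * a 0 0) =
        (4*a 0 0*a 2 2 - a 0 2*a 0 2) * (4*a 0 0*a 1 1 - a 0 1*a 0 1)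
          - (a 0 1*a 0 2 - 2*a 0 0*a 1 2) * (a 0 1*a 0 2 - 2*a 0 0*a 1 2) := by
      rw [hdet]; ring
    rw [h]; exact sqdvd _ _ _ _ hc2 hc3 he23 he23
  have k2 : c ^ 2 ∣ (coeffMatrix a).det * (2 * a 1 1) := by
    have h : (coeffMatrix a).det * (2 * a 1 1) =
        (4*a 1 1*a 2 2 - a 1 2*a 1 2) * (4*a 0 0*a 1 1 - a 0 1*a 0 1)
          - (a 0 1*a 1 2 - 2*a 1 1*a 0 2) * (a 0 1*a 1 2 - 2*a 1 1*a 0 2) := by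
      rw [hdet]; ring
    rw [h]; exact sqdvd _ _ _ _ hc1 hc3 he13 he13
  have k3 : c ^ 2 ∣ (coeffMatrix a).det * (2 * a 2 2) := by
    have h : (coeffMatrix a).det * (2 * a 2 2) =
        (4*a 1 1*a 2 2 - a 1 2*a 1 2) * (4*a 0 0*a 2 2 - a 0 2*a 0 2)
          - (a 0 2*a 1 2 - 2*a 2 2*a 0 1) * (a 0 2*a 1 2 - 2*a 2 2*a 0 1) := by
      rw [hdet]; ring
    rw [h]; exact sqdvd _ _ _ _ hc1 hc2 he12 he12
  have k4 : c ^ 2 ∣ (coeffMatrix a).det * a 0 1 := by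
    have h : (coeffMatrix a).det * a 0 1 =
        (a 0 1*a 1 2 - 2*a 1 1*a 0 2) * (a 0 1*a 0 2 - 2*a 0 0*a 1 2)
          - (a 0 2*a 1 2 - 2*a 2 2*a 0 1) * (4*a 0 0*a 1 1 - a 0 1*a 0 1) := by
      rw [hdet]; ring
    rw [h]; exact sqdvd _ _ _ _ he13 he23 he12 hc3
  have k5 : c ^ 2 ∣ (coeffMatrix a).det * a 0 2 := by
    have h : (coeffMatrix a).det * a 0 2 =
        (a 0 2*a 1 2 - 2*a 2 2*a 0 1) * (a 0 1*a 0 2 - 2*a 0 0*a 1 2)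
          - (4*a 0 0*a 2 2 - a 0 2*a 0 2) * (a 0 1*a 1 2 - 2*a 1 1*a 0 2) := by
      rw [hdet]; ring
    rw [h]; exact sqdvd _ _ _ _ he12 he23 hc2 he13
  have k6 : c ^ 2 ∣ (coeffMatrix a).det * a 1 2 := by
    have h : (coeffMatrix a).det * a 1 2 =
        (a 0 2*a 1 2 - 2*a 2 2*a 0 1) * (a 0 1*a 1 2 - 2*a 1 1*a 0 2)
          - (4*a 1 1*a 2 2 - a 1 2*a 1 2) * (a 0 1*a 0 2 - 2*a 0 0*a 1 2) := by
      rw [hdet]; ring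
    rw [h]; exact sqdvd _ _ _ _ he12 he13 hc1 he23
  -- gcd of the six multipliers
  set G : ℤ := gcd (gcd (gcd (gcd (gcd (a 0 1) (a 0 2)) (a 1 2)) (2 * a 0 0)) (2 * a 1 1))
      (2 * a 2 2) with hG
  have kG : c ^ 2 ∣ (coeffMatrix a).det * G :=
    dvd_mul_gcd' (dvd_mul_gcd' (dvd_mul_gcd' (dvd_mul_gcd' (dvd_mul_gcd' k4 k5) k6) k1) k2) k3
  have t5 : G ∣ gcd (gcd (gcd (gcd (a 0 1) (a 0 2)) (a 1 2)) (2 * a 0 0)) (2 * a 1 1) :=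
    gcd_dvd_left _ _
  have t4 := gcd_dvd_left (gcd (gcd (gcd (a 0 1) (a 0 2)) (a 1 2)) (2 * a 0 0)) (2 * a 1 1)
  have t3 := gcd_dvd_left (gcd (gcd (a 0 1) (a 0 2)) (a 1 2)) (2 * a 0 0)
  have t2 := gcd_dvd_left (gcd (a 0 1) (a 0 2)) (a 1 2)
  have hGp : G ∣ a 0 1 := (((t5.trans t4).trans t3).trans t2).trans (gcd_dvd_left _ _)
  have hGq : G ∣ a 0 2 := (((t5.trans t4).trans t3).trans t2).trans (gcd_dvd_right _ _)
  have hGr : G ∣ a 1 2 := ((t5.trans t4).trans t3).trans (gcd_dvd_right _ _)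
  have hG1 : G ∣ 2 * a 0 0 := (t5.trans t4).trans (gcd_dvd_right _ _)
  have hG2 : G ∣ 2 * a 1 1 := t5.trans (gcd_dvd_right _ _)
  have hG3 : G ∣ 2 * a 2 2 := gcd_dvd_right _ _
  have hGodd : Odd G := by
    rw [← Int.not_even_iff_odd]
    intro he
    have h2 : (2 : ℤ) ∣ G := even_iff_two_dvd.mp he
    rcases hpqr with h | h | h
    · exact (Int.not_odd_iff_even.mpr (even_iff_two_dvd.mpr (h2.trans hGp))) h
    · exact (Int.not_odd_iff_even.mpr (even_iff_two_dvd.mpr (h2.trans hGq))) h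
    · exact (Int.not_odd_iff_even.mpr (even_iff_two_dvd.mpr (h2.trans hGr))) h
  have hGone : G ∣ 1 := by
    rw [← hprim]
    apply Finset.dvd_gcd
    intro ij hij
    have hle : ij.1 ≤ ij.2 := (Finset.mem_filter.mp hij).2
    obtain ⟨i, j⟩ := ij
    fin_cases i <;> fin_cases j <;>
      first
        | exact absurd hle (by decide)
        | exact odd_dvd_of_dvd_two_mul hGodd hG1
        | exact odd_dvd_of_dvd_two_mul hGodd hG2
        | exact odd_dvd_of_dvd_two_mul hGodd hG3
        | exact hGp
        | exact hGq
        | exact hGr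
  have kdet : c ^ 2 ∣ (coeffMatrix a).det := by
    have h := mul_dvd_mul_left ((coeffMatrix a).det) hGone
    rw [mul_one] at h
    exact kG.trans h
  set M : ℤ := 4*a 0 0*a 1 1*a 2 2 + a 0 1*a 0 2*a 1 2 - a 0 0*(a 1 2*a 1 2)
    - a 1 1*(a 0 2*a 0 2) - a 2 2*(a 0 1*a 0 1) with hM
  have hMdvd : c ^ 2 ∣ M := by
    rw [hdet] at kdet
    exact odd_dvd_of_dvd_two_mul (hoddc.pow) kdet
  refine ⟨hoddc, ?_⟩
  have hdiv : -(coeffMatrix a).det / 2 = -M := by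
    rw [hdet]; omega
  rw [hdiv]
  exact dvd_neg.mpr hMdvd
end

section
/- Let q(x,y) = ax² + bxy + cy² be a positive definite integral binary quadratic form whose discriminant satisfies disc(q) = b² − 4ac ≡ 16 (mod 32), and suppose q represents some integer congruent to 3 modulo 4. Then q primitively represents an integer r₁ with r₁ ≡ 3 (mod 8) and also primitively represents an integer r₂ with r₂ ≡ 7 (mod 8); that is, there exist coprime integer pairs (x₁,y₁) and (x₂,y₂) with q(x₁,y₁) ≡ 3 (mod 8) and q(x₂,y₂) ≡ 7 (mod 8). -/
set_option maxHeartbeats 8000000 in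
set_option maxRecDepth 10000 in
lemma key : ∀ a b c : ZMod 32,
    b ^ 2 - 4 * a * c = 16 →
    (∃ x y : ZMod 4,
      (ZMod.cast a : ZMod 4) * x ^ 2 + (ZMod.cast b : ZMod 4) * x * y
        + (ZMod.cast c : ZMod 4) * y ^ 2 = 3) →
    (((ZMod.cast a : ZMod 8) = 3 ∨ (ZMod.cast c : ZMod 8) = 3 ∨
      (ZMod.cast a : ZMod 8) + (ZMod.cast b : ZMod 8) + (ZMod.cast c : ZMod 8) = 3) ∧
     ((ZMod.cast a : ZMod 8) = 7 ∨ (ZMod.cast c : ZMod 8) = 7 ∨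
      (ZMod.cast a : ZMod 8) + (ZMod.cast b : ZMod 8) + (ZMod.cast c : ZMod 8) = 7)) := by
  decide

/-- A positive definite integral binary quadratic form with discriminant `≡ 16 (mod 32)`
that represents some integer `≡ 3 (mod 4)` primitively represents an integer `≡ 3 (mod 8)`
and primitively represents an integer `≡ 7 (mod 8)`. -/
theorem binary_form_represents_three_and_seven_mod_eight
    (a b c : ℤ)
    (hpos : ∀ x y : ℤ, ¬(x = 0 ∧ y = 0) → 0 < a * x ^ 2 + b * x * y + c * y ^ 2)
    (hdisc : b ^ 2 - 4 * a * c ≡ 16 [ZMOD 32])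
    (hrep : ∃ x y : ℤ, a * x ^ 2 + b * x * y + c * y ^ 2 ≡ 3 [ZMOD 4]) :
    (∃ x y : ℤ, IsCoprime x y ∧ a * x ^ 2 + b * x * y + c * y ^ 2 ≡ 3 [ZMOD 8]) ∧
    (∃ x y : ℤ, IsCoprime x y ∧ a * x ^ 2 + b * x * y + c * y ^ 2 ≡ 7 [ZMOD 8]) := by
  obtain ⟨x0, y0, hx0⟩ := hrep
  have ha4 : (ZMod.cast ((a : ZMod 32)) : ZMod 4) = (a : ZMod 4) :=
    ZMod.cast_intCast (show (4:ℕ) ∣ 32 by norm_num) a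
  have hb4 : (ZMod.cast ((b : ZMod 32)) : ZMod 4) = (b : ZMod 4) :=
    ZMod.cast_intCast (show (4:ℕ) ∣ 32 by norm_num) b
  have hc4 : (ZMod.cast ((c : ZMod 32)) : ZMod 4) = (c : ZMod 4) :=
    ZMod.cast_intCast (show (4:ℕ) ∣ 32 by norm_num) c
  have ha8 : (ZMod.cast ((a : ZMod 32)) : ZMod 8) = (a : ZMod 8) :=
    ZMod.cast_intCast (show (8:ℕ) ∣ 32 by norm_num) a
  have hb8 : (ZMod.cast ((b : ZMod 32)) : ZMod 8) = (b : ZMod 8) :=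
    ZMod.cast_intCast (show (8:ℕ) ∣ 32 by norm_num) b
  have hc8 : (ZMod.cast ((c : ZMod 32)) : ZMod 8) = (c : ZMod 8) :=
    ZMod.cast_intCast (show (8:ℕ) ∣ 32 by norm_num) c
  have h32 : ((b : ZMod 32)) ^ 2 - 4 * (a : ZMod 32) * (c : ZMod 32) = 16 := by
    have := (ZMod.intCast_eq_intCast_iff _ _ 32).mpr hdisc
    push_cast at this
    exact this
  have h4 : ∃ x y : ZMod 4,
      (ZMod.cast ((a : ZMod 32)) : ZMod 4) * x ^ 2 + (ZMod.cast ((b : ZMod 32)) : ZMod 4) * x * y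
        + (ZMod.cast ((c : ZMod 32)) : ZMod 4) * y ^ 2 = 3 := by
    refine ⟨(x0 : ZMod 4), (y0 : ZMod 4), ?_⟩
    rw [ha4, hb4, hc4]
    have := (ZMod.intCast_eq_intCast_iff _ _ 4).mpr hx0
    push_cast at this
    exact_mod_cast this
  obtain ⟨h3, h7⟩ := key _ _ _ h32 h4
  rw [ha8, hb8, hc8] at h3 h7
  constructor
  · rcases h3 with h | h | h
    · exact ⟨1, 0, isCoprime_one_left, by
        refine (ZMod.intCast_eq_intCast_iff _ _ 8).mp ?_; push_cast; simpa using h⟩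
    · exact ⟨0, 1, isCoprime_one_right, by
        refine (ZMod.intCast_eq_intCast_iff _ _ 8).mp ?_; push_cast; simpa using h⟩
    · exact ⟨1, 1, isCoprime_one_left, by
        refine (ZMod.intCast_eq_intCast_iff _ _ 8).mp ?_; push_cast; simpa using h⟩
  · rcases h7 with h | h | h
    · exact ⟨1, 0, isCoprime_one_left, by
        refine (ZMod.intCast_eq_intCast_iff _ _ 8).mp ?_; push_cast; simpa using h⟩
    · exact ⟨0, 1, isCoprime_one_right, by
        refine (ZMod.intCast_eq_intCast_iff _ _ 8).mp ?_; push_cast; simpa using h⟩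
    · exact ⟨1, 1, isCoprime_one_left, by
        refine (ZMod.intCast_eq_intCast_iff _ _ 8).mp ?_; push_cast; simpa using h⟩
end

section
/- Let q(x,y) = ax² + bxy + cy² be a primitive integral binary quadratic form (gcd(a,b,c) = 1) whose discriminant d = b² − 4ac is even. If q primitively represents an odd integer a₀, then q primitively represents an integer a' with a' ≡ a₀ (mod 4) and gcd(a', d) = 1. -/
private lemma good_mod (A B C p : ℤ) (hA : Odd A) (hpp : Prime p)
    (hP : p ∣ A → p ∣ B → p ∣ C → False) :
    ∃ k : ℤ, ¬ p ∣ (A + 4*B*k + 16*C*k^2) := by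
  by_contra h
  push_neg at h
  have h0 := h 0
  have h1 := h 1
  have h2 := h (-1)
  have hA' : p ∣ A := by simpa using h0
  have hp2 : ¬ p ∣ 2 := by
    intro hd
    have h2A : (2:ℤ) ∣ A := by
      have : p.natAbs ∣ 2 := by
        have := Int.natAbs_dvd_natAbs.mpr hd; simpa using this
      have hp' : p.natAbs = 2 :=
        (Nat.prime_dvd_prime_iff_eq (Int.prime_iff_natAbs_prime.mp hpp) Nat.prime_two).mp
          (by exact_mod_cast this)
      have : (p.natAbs : ℤ) ∣ A := (Int.natAbs_dvd).mpr hA'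
      rwa [hp'] at this
    obtain ⟨w, hw⟩ := h2A
    exact (Int.not_odd_iff_even.mpr ⟨w, by omega⟩) hA
  have hdB : p ∣ 2*(2*(2*B)) := by
    have := dvd_sub h1 h2
    have e : (A + 4*B*1 + 16*C*1^2) - (A + 4*B*(-1) + 16*C*(-1)^2) = 2*(2*(2*B)) := by ring
    rwa [e] at this
  have hB' : p ∣ B := by
    rcases (hpp.dvd_mul.mp hdB) with h' | h'
    · exact absurd h' hp2
    rcases (hpp.dvd_mul.mp h') with h' | h'
    · exact absurd h' hp2
    rcases (hpp.dvd_mul.mp h') with h' | h'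
    · exact absurd h' hp2
    · exact h'
  have hdC : p ∣ 2*(2*(2*(2*(2*C)))) := by
    have := dvd_sub (dvd_add h1 h2) (Dvd.dvd.mul_left h0 2)
    have e : ((A + 4*B*1 + 16*C*1^2) + (A + 4*B*(-1) + 16*C*(-1)^2)) - 2*(A + 4*B*0 + 16*C*0^2)
        = 2*(2*(2*(2*(2*C)))) := by ring
    rwa [e] at this
  have hC' : p ∣ C := by
    rcases (hpp.dvd_mul.mp hdC) with h' | h'
    · exact absurd h' hp2
    rcases (hpp.dvd_mul.mp h') with h' | h'
    · exact absurd h' hp2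
    rcases (hpp.dvd_mul.mp h') with h' | h'
    · exact absurd h' hp2
    rcases (hpp.dvd_mul.mp h') with h' | h'
    · exact absurd h' hp2
    rcases (hpp.dvd_mul.mp h') with h' | h'
    · exact absurd h' hp2
    · exact h'
  exact hP hA' hB' hC'



private lemma exists_good (A B C : ℤ) (hA : Odd A)
    (hP : ∀ p : ℤ, Prime p → p ∣ A → p ∣ B → p ∣ C → False) :
    ∀ N : ℕ, ∀ n : ℤ, n.natAbs ≤ N → n ≠ 0 →
      ∃ k : ℤ, IsCoprime (A + 4*B*k + 16*C*k^2) n := by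
  intro N
  induction N with
  | zero =>
    intro n h hn
    exact absurd (Int.natAbs_eq_zero.mp (Nat.le_zero.mp h)) hn
  | succ N ih =>
    intro n hle hn
    by_cases hu : n.natAbs = 1
    · rcases Int.isUnit_iff.mp (Int.isUnit_iff_natAbs_eq.mpr hu) with rfl | rfl
      · exact ⟨0, isCoprime_one_right⟩
      · exact ⟨0, IsCoprime.neg_right isCoprime_one_right⟩
    · obtain ⟨p, hpp, hpd⟩ := Int.exists_prime_and_dvd hu
      obtain ⟨m, rfl⟩ := hpd
      have hp0 : p ≠ 0 := hpp.ne_zero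
      have hm0 : m ≠ 0 := by rintro rfl; simp at hn
      have hp2 : 2 ≤ p.natAbs := (Int.prime_iff_natAbs_prime.mp hpp).two_le
      have hmle : m.natAbs ≤ N := by
        have hmul : (p*m).natAbs = p.natAbs * m.natAbs := Int.natAbs_mul p m
      -- p.natAbs * m.natAbs ≤ N+1 and p.natAbs ≥ 2, m.natAbs ≥ 1
        have h1 : 1 ≤ m.natAbs := Nat.one_le_iff_ne_zero.mpr (Int.natAbs_ne_zero.mpr hm0)
        have h2 : 2 * m.natAbs ≤ p.natAbs * m.natAbs := Nat.mul_le_mul_right _ hp2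
        rw [hmul] at hle
        omega
      obtain ⟨k₁, hk₁⟩ := ih m hmle hm0
      by_cases hpm : p ∣ m
      · refine ⟨k₁, ?_⟩
        have hnd : ¬ p ∣ (A + 4*B*k₁ + 16*C*k₁^2) := fun hd =>
          hpp.not_unit (hk₁.isUnit_of_dvd' hd hpm)
        exact ((hpp.coprime_iff_not_dvd.mpr hnd).symm.mul_right hk₁)
      · have hco : IsCoprime m p := (hpp.coprime_iff_not_dvd.mpr hpm).symm
        obtain ⟨k₀, hk₀⟩ := good_mod A B C p hA hpp (hP p hpp)
        obtain ⟨α, β, hαβ⟩ := hco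
        refine ⟨k₁ + m * (α * (k₀ - k₁)), ?_⟩
        set k := k₁ + m * (α * (k₀ - k₁)) with hkdef
        have hfm : IsCoprime (A + 4*B*k + 16*C*k^2) m := by
          have e : A + 4*B*k + 16*C*k^2 =
              (A + 4*B*k₁ + 16*C*k₁^2) + m * ((α*(k₀-k₁)) * (4*B + 16*C*(k + k₁))) := by
            rw [hkdef]; ring
          rw [e]
          exact hk₁.add_mul_left_left _
        have hfp : ¬ p ∣ (A + 4*B*k + 16*C*k^2) := by
          intro hd
          apply hk₀
          have hkk : p ∣ k - k₀ := ⟨(k₀ - k₁) * (-β), by rw [hkdef]; linear_combination (k₀ - k₁) * hαβ⟩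
          obtain ⟨w1, hw1⟩ := hkk
          obtain ⟨w2, hw2⟩ := hd
          exact ⟨w2 - w1 * (4*B + 16*C*(k + k₀)),
            by linear_combination hw2 - (4*B + 16*C*(k + k₀)) * hw1⟩
        exact ((hpp.coprime_iff_not_dvd.mpr hfp).symm.mul_right hfm)



/-- A primitive integral binary quadratic form with even discriminant `d` that primitively
represents an odd integer `a₀` also primitively represents an integer `a' ≡ a₀ (mod 4)`
with `gcd(a', d) = 1`. -/
theorem primitively_represents_coprime_to_disc
    (a b c a₀ : ℤ)
    (hprim : Int.gcd a (Int.gcd b c) = 1)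
    (heven : Even (b ^ 2 - 4 * a * c))
    (hodd : Odd a₀)
    (hrep : ∃ x y : ℤ, IsCoprime x y ∧ a * x ^ 2 + b * x * y + c * y ^ 2 = a₀) :
    ∃ a' x y : ℤ, IsCoprime x y ∧ a * x ^ 2 + b * x * y + c * y ^ 2 = a' ∧
      a' ≡ a₀ [ZMOD 4] ∧ Int.gcd a' (b ^ 2 - 4 * a * c) = 1 := by
  obtain ⟨x₀, y₀, hxy, hq⟩ := hrep
  obtain ⟨u', v', huv⟩ := hxy
  obtain ⟨u, hu⟩ : ∃ u : ℤ, u = -v' := ⟨_, rfl⟩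
  obtain ⟨v, hv⟩ : ∃ v : ℤ, v = u' := ⟨_, rfl⟩
  have hdet : x₀*v - y₀*u = 1 := by rw [hu, hv]; linear_combination huv
  obtain ⟨B, hB⟩ : ∃ B : ℤ, B = 2*a*x₀*u + b*(x₀*v+y₀*u) + 2*c*y₀*v := ⟨_, rfl⟩
  obtain ⟨C, hC⟩ : ∃ C : ℤ, C = a*u^2+b*u*v+c*v^2 := ⟨_, rfl⟩
  have hdisc : B^2 - 4*a₀*C = b^2 - 4*a*c := by
    rw [hB, hC]
    linear_combination (4*(a*u^2+b*u*v+c*v^2)) * hq +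
      ((b^2-4*a*c)*(x₀*v - y₀*u + 1)) * hdet
  -- primitivity at the prime level
  have hP : ∀ p : ℤ, Prime p → p ∣ a₀ → p ∣ B → p ∣ C → False := by
    intro p hpp h1 h2 h3
    have hia : a₀*v^2 + B*(-(v*y₀)) + C*y₀^2 = a := by
      linear_combination (-(v^2))*hq + (-(v*y₀))*hB + (y₀^2)*hC +
        (a*(x₀*v-y₀*u+1))*hdet
    have hic : a₀*u^2 + B*(-(u*x₀)) + C*x₀^2 = c := by
      linear_combination (-(u^2))*hq + (-(u*x₀))*hB + (x₀^2)*hC +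
        (c*(x₀*v-y₀*u+1))*hdet
    have hiabc : a₀*(v-u)^2 + B*((v-u)*(x₀-y₀)) + C*(x₀-y₀)^2 = a + b + c := by
      linear_combination (-((v-u)^2))*hq + ((v-u)*(x₀-y₀))*hB + ((x₀-y₀)^2)*hC +
        ((a+b+c)*(x₀*v-y₀*u+1))*hdet
    have hda : p ∣ a := by
      rw [← hia]
      exact dvd_add (dvd_add (h1.mul_right _) (h2.mul_right _)) (h3.mul_right _)
    have hdc : p ∣ c := by
      rw [← hic]
      exact dvd_add (dvd_add (h1.mul_right _) (h2.mul_right _)) (h3.mul_right _)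
    have hdabc : p ∣ a + b + c := by
      rw [← hiabc]
      exact dvd_add (dvd_add (h1.mul_right _) (h2.mul_right _)) (h3.mul_right _)
    have hdb : p ∣ b := by
      have e : b = (a+b+c) - a - c := by ring
      rw [e]; exact dvd_sub (dvd_sub hdabc hda) hdc
    have h4 : p ∣ ((Int.gcd b c : ℤ)) := Int.dvd_coe_gcd hdb hdc
    have h5 : p ∣ ((Int.gcd a (Int.gcd b c) : ℤ)) := Int.dvd_coe_gcd hda h4
    rw [hprim] at h5
    exact hpp.not_dvd_one (by exact_mod_cast h5)
  -- B is even
  have hBeven : Even B := by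
    rcases Int.even_or_odd B with h | h
    · exact h
    · exfalso
      have : Odd (B^2) := h.pow
      have heB : Even (B^2) := by
        have : B^2 = (b^2 - 4*a*c) + 4*a₀*C := by linear_combination hdisc
        rw [this]
        exact heven.add ⟨2*a₀*C, by ring⟩
      exact (Int.not_odd_iff_even.mpr heB) ‹Odd (B^2)›
  obtain ⟨B₁, hB2⟩ : ∃ B₁ : ℤ, B = 2*B₁ := by
    obtain ⟨r, hr⟩ := hBeven; exact ⟨r, by omega⟩
  by_cases hd : b^2 - 4*a*c = 0
  · -- degenerate case
    have hsq : a₀ * C = B₁^2 := by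
      have h4 : 4*(a₀*C) = 4*(B₁^2) := by
        linear_combination -hdisc - hd + (B+2*B₁)*hB2
      exact mul_left_cancel₀ (by norm_num : (4:ℤ) ≠ 0) h4
    have hcoA : IsCoprime a₀ C := by
      rw [Int.isCoprime_iff_gcd_eq_one]
      by_contra hg
      obtain ⟨q', hq', hq2⟩ := Nat.exists_prime_and_dvd hg
      have hqa : (q':ℤ) ∣ a₀ := dvd_trans (Int.natCast_dvd_natCast.mpr hq2) (Int.gcd_dvd_left _ _)
      have hqC : (q':ℤ) ∣ C := dvd_trans (Int.natCast_dvd_natCast.mpr hq2) (Int.gcd_dvd_right _ _)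
      have hqp : Prime (q':ℤ) := Nat.prime_iff_prime_int.mp hq'
      have hqB₁ : (q':ℤ) ∣ B₁ := hqp.dvd_of_dvd_pow (n := 2) (by rw [← hsq]; exact hqa.mul_right C)
      exact hP q' hqp hqa (by rw [hB2]; exact hqB₁.mul_left 2) hqC
    obtain ⟨s, hs⟩ := Int.sq_of_isCoprime hcoA hsq
    obtain ⟨t, ht⟩ := Int.sq_of_isCoprime hcoA.symm (by linear_combination hsq : C * a₀ = B₁^2)
    have hs0 : s ≠ 0 := by
      rintro rfl
      rcases hs with h | h <;> rw [h] at hodd <;> norm_num at hodd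
    obtain ⟨ε, hε, hsA, hsC⟩ : ∃ ε : ℤ, (ε = 1 ∨ ε = -1) ∧ a₀ = ε*s^2 ∧ C = ε*t^2 := by
      have ht0 : s^2*t^2 = 0 → t = 0 := by
        intro h2
        rcases mul_eq_zero.mp h2 with h'' | h''
        · exact absurd ((pow_eq_zero_iff (two_ne_zero)).mp h'') hs0
        · exact (pow_eq_zero_iff (two_ne_zero)).mp h''
      rcases hs with h | h <;> rcases ht with h' | h'
      · exact ⟨1, Or.inl rfl, by linarith, by linarith⟩
      · have h2 : t = 0 := by
          apply ht0
          have hle : s^2*t^2 ≤ 0 := by nlinarith [sq_nonneg B₁]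
          have hge : (0:ℤ) ≤ s^2*t^2 := by positivity
          linarith
        exact ⟨1, Or.inl rfl, by linarith, by rw [h', h2]; ring⟩
      · have h2 : t = 0 := by
          apply ht0
          have hle : s^2*t^2 ≤ 0 := by nlinarith [sq_nonneg B₁]
          have hge : (0:ℤ) ≤ s^2*t^2 := by positivity
          linarith
        exact ⟨-1, Or.inr rfl, by linarith, by rw [h', h2]; ring⟩
      · exact ⟨-1, Or.inr rfl, by linarith, by linarith⟩
    have hε2 : ε^2 = 1 := by rcases hε with rfl | rfl <;> norm_num
    have hBst : B₁ = s*t ∨ B₁ = -(s*t) := by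
      have h0 : (B₁ - s*t)*(B₁ + s*t) = 0 := by
        linear_combination -hsq + C*hsA + (ε*s^2)*hsC + (s^2*t^2)*hε2
      rcases mul_eq_zero.mp h0 with h | h
      · left; linarith
      · right; linarith
    have hcost : IsCoprime s t := by
      have h1 : s ∣ a₀ := ⟨ε*s, by rw [hsA]; ring⟩
      have h2 : t ∣ C := ⟨ε*t, by rw [hsC]; ring⟩
      exact (hcoA.of_isCoprime_of_dvd_left h1).of_isCoprime_of_dvd_right h2
    obtain ⟨α, β, hab⟩ := hcost
    have hsodd : Odd s := by
      rcases Int.even_or_odd s with h | h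
      · exfalso
        obtain ⟨w, hw⟩ := h
        exact (Int.not_odd_iff_even.mpr ⟨2*ε*w^2, by rw [hsA, hw]; ring⟩) hodd
      · exact h
    obtain ⟨j, hj⟩ := hsodd
    have hmod : ε ≡ a₀ [ZMOD 4] := Int.modEq_iff_dvd.mpr ⟨ε*(j^2+j), by rw [hsA, hj]; ring⟩
    have hgcd : Int.gcd ε (b^2 - 4*a*c) = 1 := by
      rw [hd]
      rcases hε with rfl | rfl <;> simp [Int.gcd]
    rcases hBst with hBδ | hBδ
    · refine ⟨ε, x₀*α + u*(ε*β), y₀*α + v*(ε*β),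
        ⟨s*v - (ε*t)*y₀, -(s*u) + (ε*t)*x₀, ?_⟩, ?_, hmod, hgcd⟩
      · linear_combination (x₀*v - y₀*u)*hab + hdet + ((x₀*v - y₀*u)*t*β)*hε2
      · have hval1 : a*(x₀*α + u*(ε*β))^2 + b*(x₀*α + u*(ε*β))*(y₀*α + v*(ε*β))
            + c*(y₀*α + v*(ε*β))^2 = a₀*α^2 + B*(α*(ε*β)) + C*(ε*β)^2 := by
          linear_combination (α^2)*hq - (α*(ε*β))*hB - ((ε*β)^2)*hC
        have hval2 : a₀*α^2 + B*(α*(ε*β)) + C*(ε*β)^2 = ε := by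
          linear_combination (α^2)*hsA + (α*ε*β)*hB2 + (2*α*ε*β)*hBδ + (ε^2*β^2)*hsC +
            (ε*(s*α+t*β+1))*hab + (ε*t^2*β^2)*hε2
        exact hval1.trans hval2
    · refine ⟨ε, x₀*α + u*(-(ε*β)), y₀*α + v*(-(ε*β)),
        ⟨s*v + (ε*t)*y₀, -(s*u) - (ε*t)*x₀, ?_⟩, ?_, hmod, hgcd⟩
      · linear_combination (x₀*v - y₀*u)*hab + hdet + ((x₀*v - y₀*u)*t*β)*hε2
      · have hval1 : a*(x₀*α + u*(-(ε*β)))^2 + b*(x₀*α + u*(-(ε*β)))*(y₀*α + v*(-(ε*β)))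
            + c*(y₀*α + v*(-(ε*β)))^2 = a₀*α^2 + B*(α*(-(ε*β))) + C*(-(ε*β))^2 := by
          linear_combination (α^2)*hq - (α*(-(ε*β)))*hB - ((-(ε*β))^2)*hC
        have hval2 : a₀*α^2 + B*(α*(-(ε*β))) + C*(-(ε*β))^2 = ε := by
          linear_combination (α^2)*hsA + (-(α*ε*β))*hB2 + (-(2*α*ε*β))*hBδ + (ε^2*β^2)*hsC +
            (ε*(s*α+t*β+1))*hab + (ε*t^2*β^2)*hε2
        exact hval1.trans hval2
  · obtain ⟨k, hk⟩ := exists_good a₀ B C hodd hP (b^2-4*a*c).natAbs (b^2-4*a*c) le_rfl hd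
    refine ⟨a₀ + 4*B*k + 16*C*k^2, x₀ + u*(4*k), y₀ + v*(4*k), ⟨v, -u, by linear_combination hdet⟩,
      ?_, ?_, ?_⟩
    · linear_combination hq - (4*k)*hB - (16*k^2)*hC
    · exact Int.modEq_iff_dvd.mpr ⟨-(B*k) - 4*C*k^2, by ring⟩
    · exact Int.isCoprime_iff_gcd_eq_one.mp hk
end
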